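/- Let q ≥ 1 and let a_1, ..., a_n be residues mod q, each coprime to q. Let P ⊆ Z/qZ with |P| = k. Then the number of the 2^n sums ∑_{i=1}^n δ_i a_i with each δ_i ∈ {1, -1} that lie in P is at most the sum of the k middle mod-r binomial coefficients ∑_{j : (n-k)/2 ≤ j < (n+k)/2} C(n,j)_r, where r = q if q is odd and r = q/2 if q is even. -/

import Mathlib

/-- The mod-q binomial coefficient `C(n,s)_q = ∑_{0 ≤ j ≤ n, j ≡ s (mod q)} C(n,j)`. -/
def modBinom (n q : ℕ) (s : ℤ) : ℕ :=
  ∑ j ∈ Finset.range (n + 1), if ((j : ℤ) - s) % (q : ℤ) = 0 then n.choose j else 0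

/-- The sum of the `k` middle mod-`q` binomial coefficients,
`_{(n-k)/2 ≤ j < (n+k)/2} C(n,j)_q` (the integers `j` in question all lie in `[-q, n+q]`
when `k ≤ q`). -/
noncomputable def middleSum (n q k : ℕ) : ℕ :=
  ∑ j ∈ Finset.Icc (-(q : ℤ)) ((n : ℤ) + q),
    if (n : ℤ) - k ≤ 2 * j ∧ 2 * j < (n : ℤ) + k then modBinom n q j else 0


/-!
Induction on `n`. Splitting on the sign of `a₀`, the count for `P` is the sum of the counts
for `a₁, …, aₙ` with targets `X = P - a₀` and `Y = P + a₀`, and by inclusion–exclusion also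
with targets `X ∪ Y` and `X ∩ Y`, of sizes `k + d` and `k - d`. As `2 • a₀` has order at
least `r > k`, `P` is not invariant under translation by `2 • a₀`, so `d ≥ 1`. The bound
`B(n, k)`, the sum of the `k` middle values `C(n, ·)_r` (capped at `2 ^ n` from `k = r` on),
is concave in `k` because `C(n, ·)_r` decreases on a half period `[n/2, (n + r)/2]`; hence
`B(n, k + d) + B(n, k - d) ≤ B(n, k + 1) + B(n, k - 1)`, which is `B(n + 1, k)` by Pascal's
rule.
-/

section ModBinom

variable {n r : ℕ}

theorem modBinom_eq_sum_dvd (n r : ℕ) (s : ℤ) :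
    modBinom n r s = ∑ j ∈ Finset.range (n + 1), n.choose j * if (r : ℤ) ∣ j - s then 1 else 0 := by
  simp only [modBinom, mul_ite, mul_one, mul_zero, Int.dvd_iff_emod_eq_zero]

theorem modBinom_succ (n r : ℕ) (s : ℤ) :
    modBinom (n + 1) r s = modBinom n r s + modBinom n r (s - 1) := by
  have h := Finset.sum_choose_succ_mul (R := ℕ)
    (fun j _ => if (r : ℤ) ∣ j - s then 1 else 0) n
  simp only [Nat.cast_id] at h
  simp only [modBinom_eq_sum_dvd, h]
  congr 2
  ext j
  push_cast
  ring_nf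

/-- `C(n, ·)_r` is symmetric about `n / 2` and `r`-periodic. -/
theorem modBinom_eq_of_dvd_add_sub {s t : ℤ} (h : (r : ℤ) ∣ s + t - n) :
    modBinom n r s = modBinom n r t := by
  rw [modBinom_eq_sum_dvd, modBinom_eq_sum_dvd, ← Finset.sum_range_reflect]
  refine Finset.sum_congr rfl fun j hj => ?_
  have hjn : j ≤ n := Nat.lt_succ_iff.mp (Finset.mem_range.mp hj)
  rw [Nat.add_sub_cancel, Nat.choose_symm hjn, Nat.cast_sub hjn,
    show (n : ℤ) - j - s = -(j - t) - (s + t - n) by ring]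
  simp only [dvd_sub_left h, dvd_neg]

theorem modBinom_zero_of_lt {s : ℤ} (hs : 0 < s) (hsr : s < r) : modBinom 0 r s = 0 := by
  simp only [modBinom_eq_sum_dvd, zero_add, Finset.sum_range_one, Nat.choose_self, one_mul,
    Nat.cast_zero, zero_sub, dvd_neg, ite_eq_right_iff, one_ne_zero, imp_false]
  exact fun h => (Int.le_of_dvd hs h).not_gt hsr

theorem modBinom_zero_zero : modBinom 0 r 0 = 1 := by
  simp [modBinom]

theorem modBinom_succ_le : ∀ {n : ℕ} {j : ℤ}, n ≤ 2 * j + 1 → 2 * j + 1 ≤ n + r →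
    modBinom n r (j + 1) ≤ modBinom n r j
  | 0, j, h1, h2 => by
    rcases (by omega : 2 * j + 1 = r ∨ 2 * j + 1 < r) with hr | hr
    · exact (modBinom_eq_of_dvd_add_sub ⟨1, by push_cast; omega⟩).le
    · rw [modBinom_zero_of_lt (by omega) (by omega)]
      exact Nat.zero_le _
  | n + 1, j, h1, h2 => by
    push_cast at h1 h2
    rw [modBinom_succ, modBinom_succ, add_sub_cancel_right, add_comm]
    gcongr
    rcases (by omega : 2 * j = n ∨ 2 * j = n + r ∨ (n < 2 * j ∧ 2 * j < n + r)) with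
      h | h | ⟨hlo, hhi⟩
    · exact (modBinom_eq_of_dvd_add_sub ⟨0, by omega⟩).le
    · exact (modBinom_eq_of_dvd_add_sub ⟨1, by omega⟩).le
    · calc modBinom n r (j + 1) ≤ modBinom n r j := modBinom_succ_le (by omega) (by omega)
        _ = modBinom n r (j - 1 + 1) := by rw [sub_add_cancel]
        _ ≤ modBinom n r (j - 1) := modBinom_succ_le (by omega) (by omega)

theorem sum_modBinom_Ico (hr : 0 < r) (t : ℤ) :
    ∑ j ∈ Finset.Ico t (t + r), modBinom n r j = 2 ^ n := by
  simp only [modBinom_eq_sum_dvd]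
  rw [Finset.sum_comm, ← Nat.sum_range_choose]
  refine Finset.sum_congr rfl fun i _ => ?_
  have hmod := Int.emod_nonneg (i - t) (by omega : (r : ℤ) ≠ 0)
  have hmod' := Int.emod_lt_of_pos (i - t) (by omega : (0 : ℤ) < r)
  have hdvd : ∀ j ∈ Finset.Ico t (t + r), (r : ℤ) ∣ i - j ↔ j = t + (i - t) % r := by
    intro j hj
    rw [Finset.mem_Ico] at hj
    rw [← Int.modEq_iff_dvd]
    constructor
    · intro h
      have h' : (j - t) % r = (i - t) % r := h.sub_right t
      rw [Int.emod_eq_of_lt (by omega) (by omega)] at h'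
      omega
    · rintro rfl
      simpa using (Int.mod_modEq (i - t) r).add_left t
  rw [← Finset.mul_sum, Finset.sum_congr rfl fun j hj => if_congr (hdvd j hj) rfl rfl,
    Finset.sum_ite_eq', if_pos (by rw [Finset.mem_Ico]; omega), mul_one]

end ModBinom

section CentralSum

variable {n r : ℕ}

/-- `⌈(n - k) / 2⌉`, the least `j` with `n - k ≤ 2 * j`. -/
def centralStart (n k : ℕ) : ℤ := ((n : ℤ) - k + 1) / 2

noncomputable def centralSum (n r k : ℕ) : ℕ :=
  ∑ j ∈ Finset.Ico (centralStart n k) (centralStart n k + k), modBinom n r j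

@[simp]
theorem centralSum_zero : centralSum n r 0 = 0 := by
  simp [centralSum]

/-- The window grows alternately on the right and on the left; by the symmetry of
`C(n, ·)_r` the new term is `C(n, ⌈(n + k) / 2⌉)_r` either way. -/
theorem centralSum_succ (n r k : ℕ) :
    centralSum n r (k + 1) = centralSum n r k + modBinom n r (((n : ℤ) + k + 1) / 2) := by
  unfold centralSum
  set L := centralStart n k
  have hL₀ : L = ((n : ℤ) - k + 1) / 2 := rfl
  have hL₁ : centralStart n (k + 1) = ((n : ℤ) - k) / 2 := by
    simp only [centralStart]; push_cast; ring_nf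
  rcases (by omega : 2 * L = n - k ∨ 2 * L = n - k + 1) with h | h
  · rw [show centralStart n (k + 1) = L by omega, Nat.cast_succ, ← add_assoc,
      ← Finset.insert_Ico_right_eq_Ico_add_one (by omega),
      Finset.sum_insert (by simp), add_comm, show L + k = (n + k + 1) / 2 by omega]
  · rw [show centralStart n (k + 1) = L - 1 by omega, Nat.cast_succ,
      show L - 1 + (k + 1) = L + k by ring, ← Finset.insert_Ico_left_eq_Ico_sub_one (by omega),
      Finset.sum_insert (by simp), add_comm,
      modBinom_eq_of_dvd_add_sub (t := ((n : ℤ) + k + 1) / 2) ⟨0, by omega⟩]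

theorem centralSum_le_centralSum {k l : ℕ} (h : k ≤ l) : centralSum n r k ≤ centralSum n r l :=
  monotone_nat_of_le_succ (fun k => by rw [centralSum_succ]; exact Nat.le_add_right _ _) h

theorem centralSum_self (hr : 0 < r) : centralSum n r r = 2 ^ n :=
  sum_modBinom_Ico hr _

theorem centralSum_succ_succ (n r k : ℕ) :
    centralSum (n + 1) r (k + 1) = centralSum n r (k + 2) + centralSum n r k := by
  induction k with
  | zero =>
    simp only [centralSum_succ, centralSum_zero, modBinom_succ, Nat.cast_zero, Nat.cast_succ,
      zero_add, add_zero]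
    rw [modBinom_eq_of_dvd_add_sub (s := ((n : ℤ) + 1 + 1) / 2 - 1) (t := ((n : ℤ) + 1) / 2)
      ⟨0, by omega⟩, add_comm]
  | succ k ih =>
    rw [centralSum_succ (n + 1), ih, centralSum_succ n r (k + 2), centralSum_succ n r k,
      modBinom_succ]
    push_cast
    rw [show ((n : ℤ) + 1 + (k + 1) + 1) / 2 - 1 = (n + k + 1) / 2 by omega,
      show ((n : ℤ) + 1 + (k + 1) + 1) / 2 = (n + (k + 2) + 1) / 2 by omega]
    ring

theorem middleSum_eq_centralSum {k : ℕ} (hk : k ≤ n + 2 * r + 1) :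
    middleSum n r k = centralSum n r k := by
  rw [middleSum, centralSum, ← Finset.sum_filter]
  congr 1
  ext j
  simp only [Finset.mem_filter, Finset.mem_Icc, Finset.mem_Ico, centralStart]
  omega

end CentralSum

theorem Antitone.sum_range_add_add_le {M : Type*} [AddCommMonoid M] [PartialOrder M]
    [IsOrderedAddMonoid M] {f : ℕ → M} (hf : Antitone f) {i j : ℕ} (hij : i ≤ j) (d : ℕ) :
    ∑ m ∈ Finset.range (j + d), f m + ∑ m ∈ Finset.range i, f m ≤
      ∑ m ∈ Finset.range j, f m + ∑ m ∈ Finset.range (i + d), f m := by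
  rw [Finset.sum_range_add, Finset.sum_range_add, add_assoc, add_comm _ (∑ m ∈ Finset.range i, f m)]
  gcongr with m
  exact hf (by omega)

section CappedCentralSum

variable {n r : ℕ}

/-- From `k = r` on, the window covers a full period and the bound is `2 ^ n`; the cap keeps the
bound concave in `k`. -/
noncomputable def cappedCentralSum (n r k : ℕ) : ℕ := centralSum n r (min k r)

theorem cappedCentralSum_eq_sum_range (n r k : ℕ) :
    cappedCentralSum n r k =
      ∑ m ∈ Finset.range k, if m < r then modBinom n r (((n : ℤ) + m + 1) / 2) else 0 := by
  induction k with
  | zero => simp [cappedCentralSum]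
  | succ k ih =>
    rw [Finset.sum_range_succ, ← ih, cappedCentralSum, cappedCentralSum]
    split_ifs with hk
    · rw [min_eq_left (by omega), min_eq_left hk.le, centralSum_succ]
    · rw [min_eq_right (by omega), min_eq_right (by omega), add_zero]

theorem antitone_cappedCentralSum_increment :
    Antitone fun m : ℕ => if m < r then modBinom n r (((n : ℤ) + m + 1) / 2) else 0 := by
  refine antitone_nat_of_succ_le fun m => ?_
  split_ifs with h₁ h₂
  · push_cast
    rcases Int.emod_two_eq_zero_or_one ((n : ℤ) + m) with h | h
    · rw [show ((n : ℤ) + (m + 1) + 1) / 2 = (n + m) / 2 + 1 by omega,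
        show ((n : ℤ) + m + 1) / 2 = (n + m) / 2 by omega]
      exact modBinom_succ_le (by omega) (by omega)
    · rw [show ((n : ℤ) + (m + 1) + 1) / 2 = (n + m + 1) / 2 by omega]
  · omega
  all_goals exact Nat.zero_le _

theorem cappedCentralSum_add_le {i j : ℕ} (hij : i ≤ j) (d : ℕ) :
    cappedCentralSum n r (j + d) + cappedCentralSum n r i ≤
      cappedCentralSum n r j + cappedCentralSum n r (i + d) := by
  simp only [cappedCentralSum_eq_sum_range]
  exact antitone_cappedCentralSum_increment.sum_range_add_add_le hij d

theorem cappedCentralSum_succ_of_lt {k : ℕ} (hk : 0 < k) (hkr : k < r) :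
    cappedCentralSum (n + 1) r k = cappedCentralSum n r (k + 1) + cappedCentralSum n r (k - 1) := by
  obtain ⟨k, rfl⟩ := Nat.exists_eq_add_one_of_ne_zero hk.ne'
  rw [Nat.add_sub_cancel]
  simp only [cappedCentralSum, min_eq_left (by omega : k + 1 + 1 ≤ r), min_eq_left hkr.le,
    min_eq_left (by omega : k ≤ r)]
  exact centralSum_succ_succ n r k

theorem cappedCentralSum_of_le (hr : 0 < r) {k : ℕ} (hk : r ≤ k) :
    cappedCentralSum n r k = 2 ^ n := by
  rw [cappedCentralSum, min_eq_right hk, centralSum_self hr]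

theorem one_le_cappedCentralSum_zero (hr : 0 < r) {k : ℕ} (hk : 0 < k) :
    1 ≤ cappedCentralSum 0 r k := by
  rw [cappedCentralSum_eq_sum_range]
  refine le_trans ?_ (Finset.single_le_sum (fun _ _ => Nat.zero_le _) (Finset.mem_range.mpr hk))
  simp [hr, modBinom_zero_zero]

theorem cappedCentralSum_le_centralSum (n r k : ℕ) : cappedCentralSum n r k ≤ centralSum n r k :=
  centralSum_le_centralSum (min_le_left k r)

end CappedCentralSum

theorem addOrderOf_le_card_of_add_mem {G : Type*} [AddRightCancelMonoid G] {P : Finset G}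
    (hP : P.Nonempty) {g : G} (h : ∀ z ∈ P, g + z ∈ P) : addOrderOf g ≤ P.card := by
  obtain ⟨y, hy⟩ := hP
  have hmem : ∀ m : ℕ, m • g + y ∈ P := by
    intro m
    induction m with
    | zero => simpa using hy
    | succ m ih => simpa only [succ_nsmul', add_assoc] using h _ ih
  exact Finset.le_card_of_inj_on_range (fun m => m • g + y) (fun m _ => hmem m)
    fun i hi j hj hij => nsmul_injOn_Iio_addOrderOf hi hj (add_right_cancel hij)

section SignCount

open scoped Pointwise

variable {G : Type*} [AddCommGroup G] [DecidableEq G]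

def signCount {n : ℕ} (a : Fin n → G) (P : Finset G) : ℕ :=
  ((Finset.univ : Finset (Fin n → Bool)).filter
    fun δ => (∑ i, if δ i then a i else -a i) ∈ P).card

theorem signCount_le_two_pow {n : ℕ} (a : Fin n → G) (P : Finset G) : signCount a P ≤ 2 ^ n :=
  (Finset.card_filter_le _ _).trans (by simp)

@[simp]
theorem signCount_empty {n : ℕ} (a : Fin n → G) : signCount a ∅ = 0 := by
  simp [signCount]

theorem signCount_add_signCount {n : ℕ} (a : Fin n → G) (X Y : Finset G) :
    signCount a X + signCount a Y = signCount a (X ∪ Y) + signCount a (X ∩ Y) := by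
  simp only [signCount, Finset.mem_union, Finset.mem_inter, Finset.filter_or, Finset.filter_and]
  exact (Finset.card_union_add_card_inter _ _).symm

theorem signCount_succ {n : ℕ} (a : Fin (n + 1) → G) (P : Finset G) :
    signCount a P = signCount (Fin.tail a) (-a 0 +ᵥ P) + signCount (Fin.tail a) (a 0 +ᵥ P) := by
  simp only [signCount, Finset.card_filter]
  rw [← (Fin.consEquiv fun _ => Bool).sum_comp, Fintype.sum_prod_type, Fintype.sum_bool]
  simp [Fin.sum_univ_succ, Fin.tail, ← Finset.neg_vadd_mem_iff]

/-- If `-g + P` and `g + P` shared all their elements, `P` would be invariant under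
translation by `2 • g`. -/
theorem card_neg_vadd_inter_vadd_lt {P : Finset G} (hP : P.Nonempty) {g : G}
    (hg : P.card < addOrderOf (2 • g)) : ((-g +ᵥ P) ∩ (g +ᵥ P)).card < P.card := by
  by_contra! hle
  have hX : (-g +ᵥ P) ∩ (g +ᵥ P) = -g +ᵥ P := Finset.eq_of_subset_of_card_le
    Finset.inter_subset_left (by rwa [Finset.card_vadd_finset])
  have hY : (-g +ᵥ P) ∩ (g +ᵥ P) = g +ᵥ P := Finset.eq_of_subset_of_card_le
    Finset.inter_subset_right (by rwa [Finset.card_vadd_finset])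
  have hinv : ∀ z ∈ P, 2 • g + z ∈ P := by
    intro z hz
    have : g + z ∈ -g +ᵥ P := by
      rw [← hX, hY]
      exact Finset.vadd_mem_vadd_finset hz
    simpa [two_nsmul, add_assoc, Finset.mem_neg_vadd_finset_iff] using this
  exact (addOrderOf_le_card_of_add_mem hP hinv).not_gt hg

theorem signCount_le_cappedCentralSum {r : ℕ} (hr : 0 < r) {n : ℕ} (a : Fin n → G)
    (ha : ∀ i, r ≤ addOrderOf (2 • a i)) (P : Finset G) :
    signCount a P ≤ cappedCentralSum n r P.card := by
  induction n generalizing P with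
  | zero =>
    rcases P.eq_empty_or_nonempty with rfl | hP
    · simp
    · exact (signCount_le_two_pow a P).trans (one_le_cappedCentralSum_zero hr hP.card_pos)
  | succ n ih =>
    rcases P.eq_empty_or_nonempty with rfl | hP
    · simp
    rcases le_or_gt r P.card with hrP | hPr
    · rw [cappedCentralSum_of_le hr hrP]
      exact signCount_le_two_pow a P
    set X := -a 0 +ᵥ P
    set Y := a 0 +ᵥ P
    have hinter : (X ∩ Y).card < P.card := card_neg_vadd_inter_vadd_lt hP (hPr.trans_le (ha 0))
    have hcard : (X ∪ Y).card + (X ∩ Y).card = 2 * P.card := by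
      rw [Finset.card_union_add_card_inter, Finset.card_vadd_finset, Finset.card_vadd_finset,
        two_mul]
    have ih' := ih (Fin.tail a) fun i => ha i.succ
    calc signCount a P = signCount (Fin.tail a) (X ∪ Y) + signCount (Fin.tail a) (X ∩ Y) := by
          rw [signCount_succ, signCount_add_signCount]
      _ ≤ cappedCentralSum n r (X ∪ Y).card + cappedCentralSum n r (X ∩ Y).card :=
          add_le_add (ih' _) (ih' _)
      _ ≤ cappedCentralSum n r (P.card + 1) + cappedCentralSum n r (P.card - 1) := by
          convert cappedCentralSum_add_le (n := n) (r := r) (j := P.card + 1)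
            (Nat.le_succ_of_le hinter.le) (P.card - 1 - (X ∩ Y).card) using 3 <;> omega
      _ = cappedCentralSum (n + 1) r P.card := (cappedCentralSum_succ_of_lt hP.card_pos hPr).symm

end SignCount

theorem ZMod.addOrderOf_two_nsmul_of_isUnit {q : ℕ} [NeZero q] {x : ZMod q} (hx : IsUnit x) :
    addOrderOf (2 • x) = if q % 2 = 1 then q else q / 2 := by
  have hx_order : addOrderOf x = q := by
    have hcop : Nat.Coprime q x.val := by
      simpa [IsUnit.unit_spec] using (ZMod.val_coe_unit_coprime hx.unit).symm
    rw [← ZMod.natCast_zmod_val x, ZMod.addOrderOf_coe _ (NeZero.ne q), hcop.gcd_eq_one,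
      Nat.div_one]
  rw [addOrderOf_nsmul, hx_order, Nat.gcd_comm, Nat.gcd_rec]
  rcases Nat.mod_two_eq_zero_or_one q with h | h <;> simp [h]

theorem griggs_pm_version (q n k : ℕ) [NeZero q] (a : Fin n → ZMod q)
    (ha : ∀ i, IsUnit (a i)) (P : Finset (ZMod q)) (hP : P.card = k) :
    ((Finset.univ : Finset (Fin n → Bool)).filter
        (fun δ => (∑ i, if δ i then a i else -a i) ∈ P)).card ≤
      middleSum n (if q % 2 = 1 then q else q / 2) k := by
  set r := if q % 2 = 1 then q else q / 2 with hr_def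
  have hq := NeZero.ne q
  obtain ⟨hr, hqr⟩ : 0 < r ∧ q ≤ 2 * r := by
    rw [hr_def]
    split_ifs <;> omega
  have hkq : k ≤ q := hP ▸ P.card_le_univ.trans_eq (ZMod.card q)
  calc signCount a P
      ≤ cappedCentralSum n r k := hP ▸ signCount_le_cappedCentralSum hr a
          (fun i => (ZMod.addOrderOf_two_nsmul_of_isUnit (ha i)).ge) P
    _ ≤ centralSum n r k := cappedCentralSum_le_centralSum n r k
    _ = middleSum n r k := (middleSum_eq_centralSum (by omega)).symm
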